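/- For every A-bounded operator T and α ∈ [0,1], max{1/2, sqrt(1−α)} · ‖T‖_A ≤ ‖T‖_{A,α} ≤ ‖T‖_A, where ‖T‖_A is the A-operator seminorm. -/

import Mathlib

open scoped ComplexOrder
open ContinuousLinearMap Filter Topology

variable {H : Type*} [NormedAddCommGroup H] [InnerProductSpace ℂ H] [CompleteSpace H]

/-- The A-semi-inner product `⟨x, y⟩_A = ⟨A x, y⟩` (Mathlib convention: conjugate
linear in the first variable). -/
noncomputable def aInner (A : H →L[ℂ] H) (x y : H) : ℂ := inner ℂ (A x) y

/-- The A-seminorm `‖x‖_A = sqrt ⟨x, x⟩_A`. -/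
noncomputable def aNorm (A : H →L[ℂ] H) (x : H) : ℝ := Real.sqrt (aInner A x x).re

/-- `T` is A-bounded. -/
def ABounded (A T : H →L[ℂ] H) : Prop := ∃ c > 0, ∀ x, aNorm A (T x) ≤ c * aNorm A x

/-- The A-operator seminorm. -/
noncomputable def opNormA (A T : H →L[ℂ] H) : ℝ :=
  sSup {r | ∃ x ∈ closure (Set.range A), aNorm A x = 1 ∧ r = aNorm A (T x)}

/-- The A-numerical radius. -/
noncomputable def wA (A T : H →L[ℂ] H) : ℝ :=
  sSup {r | ∃ x, aNorm A x = 1 ∧ r = ‖aInner A (T x) x‖}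

/-- The A-Crawford number. -/
noncomputable def cA (A T : H →L[ℂ] H) : ℝ :=
  sInf {r | ∃ x, aNorm A x = 1 ∧ r = ‖aInner A (T x) x‖}

/-- The `A_α`-seminorm `‖T‖_{A,α}`. -/
noncomputable def alphaNorm (A T : H →L[ℂ] H) (α : ℝ) : ℝ :=
  sSup {r | ∃ x, aNorm A x = 1 ∧
    r = Real.sqrt (α * ‖aInner A (T x) x‖ ^ 2 + (1 - α) * aNorm A (T x) ^ 2)}

/-- `S` is the A-adjoint `T^{♯_A}` of `T`: the solution of `A X = T* A` whose
range lies in the closure of the range of `A`. -/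
def IsAAdjoint (A T S : H →L[ℂ] H) : Prop :=
  A ∘L S = (ContinuousLinearMap.adjoint T) ∘L A ∧ ∀ x, S x ∈ closure (Set.range A)

/-! Writing `A = S²` with `S = √A`, the `A`-semi-inner product becomes `⟨x, y⟩_A = ⟨S x, S y⟩`,
so Hilbert-space arguments apply to `‖·‖_A`. The upper bound is Cauchy–Schwarz,
`|⟨Tx, x⟩_A| ≤ ‖Tx‖_A`, together with the fact that the supremum defining `‖T‖_A` may be taken over
all `A`-unit vectors: projecting `x` onto the closure of `R(A)` changes neither `‖x‖_A` nor
`‖Tx‖_A`. The bound `√(1 - α) ‖T‖_A ≤ ‖T‖_{A,α}` is read off the definition; the bound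
`‖T‖_A ≤ 2 ‖T‖_{A,α}` comes from the polarization identity for `x ↦ ⟨Tx, x⟩_A`, bounded by
`‖T‖_{A,α} ‖x‖_A²`, combined with the parallelogram law for `‖·‖_A`. -/

open scoped InnerProductSpace

section Polarization

variable {V F : Type*} [NormedAddCommGroup V] [InnerProductSpace ℂ V]
  [NormedAddCommGroup F] [InnerProductSpace ℂ F]

theorem norm_inner_map_le_of_norm_inner_map_self_le (L : V →ₗ[ℂ] V) (G : V →ₗ[ℂ] F) {w : ℝ}
    (hL : ∀ z, ‖⟪L z, z⟫_ℂ‖ ≤ w * ‖G z‖ ^ 2) (x y : V) :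
    ‖⟪L x, y⟫_ℂ‖ ≤ w * (‖G x‖ ^ 2 + ‖G y‖ ^ 2) := by
  set q : V → ℂ := fun z ↦ ⟪L z, z⟫_ℂ
  have h_polar : 4 * ‖⟪L x, y⟫_ℂ‖
      ≤ ‖q (x + y)‖ + ‖q (x - y)‖ + ‖q (x + Complex.I • y)‖ + ‖q (x - Complex.I • y)‖ := by
    have h4 : ‖(4 : ℂ)‖ = 4 := by norm_num
    rw [← h4, ← norm_mul, inner_map_polarization', mul_div_cancel₀ _ (by norm_num)]
    have := norm_add_le (q (x + y) - q (x - y) - Complex.I * q (x + Complex.I • y))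
      (Complex.I * q (x - Complex.I • y))
    have := norm_sub_le (q (x + y) - q (x - y)) (Complex.I * q (x + Complex.I • y))
    have := norm_sub_le (q (x + y)) (q (x - y))
    simp only [norm_mul, Complex.norm_I, one_mul] at *
    linarith
  have h_par := parallelogram_law_with_norm ℂ (G x) (G y)
  have h_par_I := parallelogram_law_with_norm ℂ (G x) (Complex.I • G y)
  rw [norm_smul, Complex.norm_I, one_mul] at h_par_I
  have h₁ := hL (x + y)
  have h₂ := hL (x - y)
  have h₃ := hL (x + Complex.I • y)
  have h₄ := hL (x - Complex.I • y)
  simp only [q, map_add, map_sub, map_smul] at *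
  linear_combination (h_polar + h₁ + h₂ + h₃ + h₄ + w * h_par + w * h_par_I) / 4

end Polarization

section RealInequalities

variable {α q n : ℝ}

theorem sqrt_mix_le (hα : 0 ≤ α) (hq : 0 ≤ q) (hqn : q ≤ n) :
    √(α * q ^ 2 + (1 - α) * n ^ 2) ≤ n := by
  refine Real.sqrt_le_iff.mpr ⟨hq.trans hqn, ?_⟩
  nlinarith [mul_le_mul_of_nonneg_left (pow_le_pow_left₀ hq hqn 2) hα]

theorem le_sqrt_mix (hα : α ≤ 1) (hq : 0 ≤ q) (hqn : q ≤ n) :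
    q ≤ √(α * q ^ 2 + (1 - α) * n ^ 2) := by
  refine Real.le_sqrt_of_sq_le ?_
  nlinarith [mul_le_mul_of_nonneg_left (pow_le_pow_left₀ hq hqn 2) (sub_nonneg.mpr hα)]

theorem sqrt_one_sub_mul_le_sqrt_mix (hα : 0 ≤ α) (hn : 0 ≤ n) :
    √(1 - α) * n ≤ √(α * q ^ 2 + (1 - α) * n ^ 2) := by
  calc √(1 - α) * n = √((1 - α) * n ^ 2) := by
        rw [Real.sqrt_mul' _ (sq_nonneg n), Real.sqrt_sq hn]
    _ ≤ √(α * q ^ 2 + (1 - α) * n ^ 2) :=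
      Real.sqrt_le_sqrt (le_add_of_nonneg_left (by positivity))

end RealInequalities

section ASeminorm

variable {E : Type*} [NormedAddCommGroup E] [InnerProductSpace ℂ E] {A T : E →L[ℂ] E} {α : ℝ}

theorem aInner_eq_inner_sqrt [CompleteSpace E] (hA : A.IsPositive) (x y : E) :
    aInner A x y = ⟪CFC.sqrt A x, CFC.sqrt A y⟫_ℂ := by
  have hAx : A x = CFC.sqrt A (CFC.sqrt A x) := by
    rw [← mul_apply_eq_comp, CFC.sqrt_mul_sqrt_self A ((nonneg_iff_isPositive A).mpr hA)]
  rw [aInner, hAx]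
  exact (IsSelfAdjoint.of_nonneg (CFC.sqrt_nonneg A)).isSymmetric _ _

theorem aNorm_eq_norm_sqrt [CompleteSpace E] (hA : A.IsPositive) (x : E) :
    aNorm A x = ‖CFC.sqrt A x‖ := by
  rw [aNorm, aInner_eq_inner_sqrt hA, inner_self_eq_norm_sq_to_K]
  norm_cast
  exact Real.sqrt_sq (norm_nonneg _)

theorem aNorm_nonneg (x : E) : 0 ≤ aNorm A x := Real.sqrt_nonneg _

theorem norm_aInner_le [CompleteSpace E] (hA : A.IsPositive) (x y : E) :
    ‖aInner A x y‖ ≤ aNorm A x * aNorm A y := by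
  rw [aInner_eq_inner_sqrt hA, aNorm_eq_norm_sqrt hA, aNorm_eq_norm_sqrt hA]
  exact norm_inner_le_norm _ _

theorem aNorm_smul [CompleteSpace E] (hA : A.IsPositive) (c : ℂ) (x : E) :
    aNorm A (c • x) = ‖c‖ * aNorm A x := by
  rw [aNorm_eq_norm_sqrt hA, aNorm_eq_norm_sqrt hA, map_smul, norm_smul]

theorem norm_aInner_smul_smul (c : ℂ) (x y : E) :
    ‖aInner A (c • x) (c • y)‖ = ‖c‖ ^ 2 * ‖aInner A x y‖ := by
  rw [aInner, aInner, map_smul, inner_smul_left, inner_smul_right, norm_mul, norm_mul,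
    Complex.norm_conj, sq, mul_assoc]

theorem aNorm_inv_smul_self [CompleteSpace E] (hA : A.IsPositive) {x : E} (hx : aNorm A x ≠ 0) :
    aNorm A ((aNorm A x : ℂ)⁻¹ • x) = 1 := by
  rw [aNorm_smul hA, norm_inv, Complex.norm_real, Real.norm_of_nonneg (aNorm_nonneg x),
    inv_mul_cancel₀ hx]

theorem aNorm_eq_of_aNorm_sub_eq_zero [CompleteSpace E] (hA : A.IsPositive) {x y : E}
    (h : aNorm A (x - y) = 0) :
    aNorm A x = aNorm A y := by
  rw [aNorm_eq_norm_sqrt hA, map_sub, norm_sub_eq_zero_iff] at h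
  rw [aNorm_eq_norm_sqrt hA, aNorm_eq_norm_sqrt hA, h]

theorem exists_mem_closure_range_aNorm_sub_eq_zero [CompleteSpace E] (x : E) :
    ∃ u ∈ closure (Set.range A), aNorm A (x - u) = 0 := by
  set K := (LinearMap.range (A : E →ₗ[ℂ] E)).topologicalClosure
  have : CompleteSpace K := (Submodule.isClosed_topologicalClosure _).completeSpace_coe
  refine ⟨K.starProjection x, ?_, ?_⟩
  · simpa only [K, ← SetLike.mem_coe, Submodule.topologicalClosure_coe, LinearMap.coe_range,
      ContinuousLinearMap.coe_coe] using K.starProjection_apply_mem x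
  · have hA_mem : A (x - K.starProjection x) ∈ K :=
      Submodule.le_topologicalClosure _ (LinearMap.mem_range_self (A : E →ₗ[ℂ] E) _)
    rw [aNorm, aInner, (Submodule.mem_orthogonal K _).mp
      (K.sub_starProjection_mem_orthogonal x) _ hA_mem]
    simp

theorem norm_aInner_le_of_aNorm_eq_one [CompleteSpace E] (hA : A.IsPositive) {y : E}
    (hy : aNorm A y = 1) (x : E) : ‖aInner A x y‖ ≤ aNorm A x := by
  simpa [hy] using norm_aInner_le hA x y

theorem norm_aInner_self [CompleteSpace E] (hA : A.IsPositive) (x : E) :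
    ‖aInner A x x‖ = aNorm A x ^ 2 := by
  rw [aInner_eq_inner_sqrt hA, aNorm_eq_norm_sqrt hA, inner_self_eq_norm_sq_to_K]
  norm_cast
  exact Real.norm_of_nonneg (sq_nonneg _)

theorem ABounded.aNorm_apply_eq_zero (hT : ABounded A T) {x : E} (hx : aNorm A x = 0) :
    aNorm A (T x) = 0 := by
  obtain ⟨c, -, hc⟩ := hT
  exact le_antisymm (by simpa [hx] using hc x) (aNorm_nonneg _)

theorem ABounded.aNorm_apply_le (hT : ABounded A T) :
    ∃ c, ∀ x, aNorm A x = 1 → aNorm A (T x) ≤ c := by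
  obtain ⟨c, -, hc⟩ := hT
  exact ⟨c, fun x hx ↦ by simpa [hx] using hc x⟩

theorem opNormA_nonneg : 0 ≤ opNormA A T :=
  Real.sSup_nonneg (by rintro r ⟨x, -, -, rfl⟩; exact aNorm_nonneg _)

theorem ABounded.le_opNormA [CompleteSpace E] (hA : A.IsPositive) (hT : ABounded A T) {x : E}
    (hx : aNorm A x = 1) : aNorm A (T x) ≤ opNormA A T := by
  obtain ⟨c, hc⟩ := hT.aNorm_apply_le
  obtain ⟨u, hu, hxu⟩ := exists_mem_closure_range_aNorm_sub_eq_zero (A := A) x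
  have hTxu : aNorm A (T x - T u) = 0 := map_sub T x u ▸ hT.aNorm_apply_eq_zero hxu
  rw [aNorm_eq_of_aNorm_sub_eq_zero hA hTxu]
  refine le_csSup ⟨c, ?_⟩ ⟨u, hu, (aNorm_eq_of_aNorm_sub_eq_zero hA hxu).symm.trans hx, rfl⟩
  rintro r ⟨y, -, hy, rfl⟩
  exact hc y hy

theorem mul_opNormA_le {a C : ℝ} (ha : 0 ≤ a) (hC : 0 ≤ C)
    (h : ∀ x ∈ closure (Set.range A), aNorm A x = 1 → a * aNorm A (T x) ≤ C) :
    a * opNormA A T ≤ C := by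
  rw [opNormA, ← smul_eq_mul, ← Real.sSup_smul_of_nonneg ha]
  refine Real.sSup_le ?_ hC
  rintro _ ⟨_, ⟨x, hxA, hx, rfl⟩, rfl⟩
  exact h x hxA hx

theorem alphaNorm_nonneg : 0 ≤ alphaNorm A T α :=
  Real.sSup_nonneg (by rintro r ⟨x, -, rfl⟩; positivity)

theorem alphaNorm_le {C : ℝ} (hC : 0 ≤ C)
    (h : ∀ x, aNorm A x = 1 →
      √(α * ‖aInner A (T x) x‖ ^ 2 + (1 - α) * aNorm A (T x) ^ 2) ≤ C) :
    alphaNorm A T α ≤ C :=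
  Real.sSup_le (by rintro r ⟨x, hx, rfl⟩; exact h x hx) hC

theorem ABounded.le_alphaNorm [CompleteSpace E] (hA : A.IsPositive) (hT : ABounded A T)
    (hα : 0 ≤ α) {x : E} (hx : aNorm A x = 1) :
    √(α * ‖aInner A (T x) x‖ ^ 2 + (1 - α) * aNorm A (T x) ^ 2) ≤ alphaNorm A T α := by
  obtain ⟨c, hc⟩ := hT.aNorm_apply_le
  refine le_csSup ⟨c, ?_⟩ ⟨x, hx, rfl⟩
  rintro r ⟨y, hy, rfl⟩
  exact (sqrt_mix_le hα (norm_nonneg _) (norm_aInner_le_of_aNorm_eq_one hA hy _)).trans (hc y hy)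

theorem ABounded.norm_aInner_apply_self_le [CompleteSpace E] (hA : A.IsPositive)
    (hT : ABounded A T) (hα : α ∈ Set.Icc (0 : ℝ) 1) (z : E) :
    ‖aInner A (T z) z‖ ≤ alphaNorm A T α * aNorm A z ^ 2 := by
  by_cases hz : aNorm A z = 0
  · simpa [hz] using norm_aInner_le hA (T z) z
  have hu := aNorm_inv_smul_self hA hz
  have h_unit : ‖aInner A (T ((aNorm A z : ℂ)⁻¹ • z)) ((aNorm A z : ℂ)⁻¹ • z)‖
      ≤ alphaNorm A T α :=
    (le_sqrt_mix hα.2 (norm_nonneg _) (norm_aInner_le_of_aNorm_eq_one hA hu _)).trans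
      (hT.le_alphaNorm hA hα.1 hu)
  rw [map_smul, norm_aInner_smul_smul, norm_inv, Complex.norm_real,
    Real.norm_of_nonneg (aNorm_nonneg z), inv_pow, inv_mul_le_iff₀ (by positivity)] at h_unit
  linarith

theorem ABounded.norm_aInner_apply_le [CompleteSpace E] (hA : A.IsPositive)
    (hT : ABounded A T) (hα : α ∈ Set.Icc (0 : ℝ) 1) (x y : E) :
    ‖aInner A (T x) y‖ ≤ alphaNorm A T α * (aNorm A x ^ 2 + aNorm A y ^ 2) := by
  have hq (z : E) : ‖aInner A (T z) z‖ ≤ alphaNorm A T α * ‖CFC.sqrt A z‖ ^ 2 := by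
    rw [← aNorm_eq_norm_sqrt hA]
    exact hT.norm_aInner_apply_self_le hA hα z
  rw [aNorm_eq_norm_sqrt hA, aNorm_eq_norm_sqrt hA]
  exact norm_inner_map_le_of_norm_inner_map_self_le (A ∘L T).toLinearMap
    (CFC.sqrt A).toLinearMap hq x y

theorem ABounded.aNorm_apply_le_two_mul_alphaNorm [CompleteSpace E] (hA : A.IsPositive)
    (hT : ABounded A T) (hα : α ∈ Set.Icc (0 : ℝ) 1) {x : E} (hx : aNorm A x = 1) :
    aNorm A (T x) ≤ 2 * alphaNorm A T α := by
  by_cases hTx : aNorm A (T x) = 0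
  · rw [hTx]
    exact mul_nonneg zero_le_two alphaNorm_nonneg
  have h := hT.norm_aInner_apply_le hA hα x ((aNorm A (T x) : ℂ)⁻¹ • T x)
  rw [aNorm_inv_smul_self hA hTx, hx, aInner, inner_smul_right, ← aInner, norm_mul,
    norm_aInner_self hA, norm_inv, Complex.norm_real, Real.norm_of_nonneg (aNorm_nonneg _), sq,
    inv_mul_cancel_left₀ hTx] at h
  linarith

end ASeminorm

theorem stmt4 (A T : H →L[ℂ] H) (hA : A.IsPositive) (hT : ABounded A T)
    (α : ℝ) (hα : α ∈ Set.Icc (0:ℝ) 1) :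
    max (1/2) (Real.sqrt (1 - α)) * opNormA A T ≤ alphaNorm A T α ∧
    alphaNorm A T α ≤ opNormA A T := by
  refine ⟨mul_opNormA_le (by positivity) alphaNorm_nonneg fun x _ hx ↦ ?_,
    alphaNorm_le opNormA_nonneg fun x hx ↦ ?_⟩
  · rw [max_mul_of_nonneg _ _ (aNorm_nonneg _)]
    refine max_le ?_ ((sqrt_one_sub_mul_le_sqrt_mix hα.1 (aNorm_nonneg _)).trans
      (hT.le_alphaNorm hA hα.1 hx))
    linarith [hT.aNorm_apply_le_two_mul_alphaNorm hA hα hx]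
  · exact (sqrt_mix_le hα.1 (norm_nonneg _) (norm_aInner_le_of_aNorm_eq_one hA hx _)).trans
      (hT.le_opNormA hA hx)
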